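/- Soundness and completeness of SQCHL(ℛ,Q,C): let ⟨ℛ, Q, C⟩ be an admissible triple and P a SQCLP(ℛ,Q,C)-program. Then for every observable qc-atom φ, the following three statements are equivalent: (i) P ⊢_{ℛ,Q,C} φ; (ii) P ⊨_{ℛ,Q,C} φ (i.e., I ⊨ φ for every model I of P); (iii) M_P ⊨ φ, where M_P is the least model of P. -/

import Mathlib

open scoped BigOperators

/-- A qualification domain: a bounded lattice equipped with an attenuation operation. -/
structure QualificationDomain (D : Type*) [Lattice D] [BoundedOrder D] where
  att : D → D → D
  att_assoc : ∀ d e f : D, att (att d e) f = att d (att e f)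
  att_comm : ∀ d e : D, att d e = att e d
  att_mono : ∀ d d' e e' : D, d ≤ d' → e ≤ e' → att d e ≤ att d' e'
  att_top : ∀ d : D, att d ⊤ = d
  att_bot : ∀ d : D, att d ⊥ = ⊥
  att_le : ∀ d e : D, att d e ≤ e
  att_ne_bot : ∀ d e : D, d ≠ ⊥ → e ≠ ⊥ → att d e ≠ ⊥
  att_inf : ∀ d e₁ e₂ : D, att d (e₁ ⊓ e₂) = att d e₁ ⊓ att d e₂

/-- First-order terms over variables `V` and data constructors `CS`. -/
inductive Trm (V : Type*) (CS : Type*) : Type _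
  | var : V → Trm V CS
  | app : CS → List (Trm V CS) → Trm V CS

variable {V CS DP PP : Type*}

/-- Application of a substitution to a term. -/
def Trm.subst (θ : V → Trm V CS) : Trm V CS → Trm V CS
  | .var X => θ X
  | .app c ts => .app c (ts.attach.map fun t => t.1.subst θ)
decreasing_by
  have := List.sizeOf_lt_of_mem t.2
  simp only [Trm.app.sizeOf_spec]
  omega

/-- Application of a valuation (ground substitution) to a term; ground terms are
terms over the empty set of variables. -/
def Trm.applyVal (η : V → Trm Empty CS) : Trm V CS → Trm Empty CS
  | .var X => η X
  | .app c ts => .app c (ts.attach.map fun t => t.1.applyVal η)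
decreasing_by
  have := List.sizeOf_lt_of_mem t.2
  simp only [Trm.app.sizeOf_spec]
  omega

variable {D : Type*} [Lattice D] [BoundedOrder D]

/-- The extension of a proximity relation on symbols to a proximity relation on terms:
`ext R (var X) (var X) = ⊤`, `ext R t s = ⊥` if exactly one of `t`, `s` is a variable or
they are applications of different arities, and
`ext R (c(t₁,…,tₙ)) (c'(s₁,…,sₙ)) = R c c' ⊓ ext R t₁ s₁ ⊓ ⋯ ⊓ ext R tₙ sₙ`. -/
def Trm.ext [DecidableEq V] (R : CS → CS → D) : Trm V CS → Trm V CS → D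
  | .var X, .var Y => if X = Y then (⊤ : D) else ⊥
  | .var _, .app _ _ => ⊥
  | .app _ _, .var _ => ⊥
  | .app c ts, .app c' ss =>
      if ts.length = ss.length then
        R c c' ⊓ ((ts.zip ss).attach.map (fun p => Trm.ext R p.1.1 p.1.2)).foldr (· ⊓ ·) ⊤
      else ⊥
termination_by t _ => sizeOf t
decreasing_by
  have h1 : p.1.1 ∈ ts := (List.of_mem_zip p.2).1
  have := List.sizeOf_lt_of_mem h1
  simp only [Trm.app.sizeOf_spec]
  omega

/-- Constraints over terms: primitive atoms, equations, conjunction and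
existential quantification. -/
inductive Constr (V CS PP : Type*) : Type _
  | prim : PP → List (Trm V CS) → Constr V CS PP
  | eq : Trm V CS → Trm V CS → Constr V CS PP
  | and : Constr V CS PP → Constr V CS PP → Constr V CS PP
  | ex : V → Constr V CS PP → Constr V CS PP

/-- Satisfaction of a constraint by a valuation, relative to an interpretation `pI` of the
primitive predicates over ground terms.  An equation is true iff both sides evaluate to the
same ground term. -/
def Constr.sat [DecidableEq V] (pI : PP → List (Trm Empty CS) → Prop)
    (η : V → Trm Empty CS) : Constr V CS PP → Prop
  | .prim p ts => pI p (ts.map (Trm.applyVal η))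
  | .eq t s => t.applyVal η = s.applyVal η
  | .and c₁ c₂ => c₁.sat pI η ∧ c₂.sat pI η
  | .ex X c => ∃ u : Trm Empty CS, c.sat pI (Function.update η X u)

/-- The set of solutions of a set of constraints. -/
def Sol [DecidableEq V] (pI : PP → List (Trm Empty CS) → Prop)
    (Pi : Set (Constr V CS PP)) : Set (V → Trm Empty CS) :=
  {η | ∀ c ∈ Pi, c.sat pI η}

/-- Entailment `Π ⊨_C π` of a constraint by a set of constraints. -/
def Entails [DecidableEq V] (pI : PP → List (Trm Empty CS) → Prop)
    (Pi : Set (Constr V CS PP)) (c : Constr V CS PP) : Prop :=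
  ∀ η ∈ Sol pI Pi, c.sat pI η

/-- Semantic form of the entailment `Π' ⊨_C Πθ`: every solution of `Π'`, composed with the
substitution `θ`, is a solution of `Π`. -/
def EntailsSubst [DecidableEq V] (pI : PP → List (Trm Empty CS) → Prop)
    (Pi' : Set (Constr V CS PP)) (θ : V → Trm V CS) (Pi : Set (Constr V CS PP)) : Prop :=
  ∀ η ∈ Sol pI Pi', (fun X => (θ X).applyVal η) ∈ Sol pI Pi

/-- Constraint-based term proximity: `t ≈_{d,Π} s` iff there are terms `t̂`, `ŝ` with
`Π ⊨_C t == t̂`, `Π ⊨_C s == ŝ` and `ext R t̂ ŝ ⊒ d`. -/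
def TermClose [DecidableEq V] (R : CS → CS → D) (pI : PP → List (Trm Empty CS) → Prop)
    (d : D) (Pi : Set (Constr V CS PP)) (t s : Trm V CS) : Prop :=
  ∃ th sh : Trm V CS,
    Entails pI Pi (Constr.eq t th) ∧ Entails pI Pi (Constr.eq s sh) ∧ d ≤ Trm.ext R th sh

/-- Atoms: defined atoms, primitive atoms and equations. -/
inductive Atom (V CS DP PP : Type*) : Type _
  | defd : DP → List (Trm V CS) → Atom V CS DP PP
  | prim : PP → List (Trm V CS) → Atom V CS DP PP
  | eq : Trm V CS → Trm V CS → Atom V CS DP PP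

/-- Application of a substitution to an atom. -/
def Atom.subst (θ : V → Trm V CS) : Atom V CS DP PP → Atom V CS DP PP
  | .defd r ts => .defd r (ts.map (Trm.subst θ))
  | .prim p ts => .prim p (ts.map (Trm.subst θ))
  | .eq t s => .eq (t.subst θ) (s.subst θ)

/-- A defined atom. -/
def Atom.IsDefined : Atom V CS DP PP → Prop
  | .defd _ _ => True
  | .prim _ _ => False
  | .eq _ _ => False

/-- A qualified constrained atom (qc-atom) `A#d ⇐ Π`. -/
structure QCAtom (V CS DP PP D : Type*) where
  atom : Atom V CS DP PP
  deg : D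
  cons : Set (Constr V CS PP)

/-- A qc-atom is observable iff its qualification value is not `⊥` and its constraint
set is satisfiable. -/
def Observable [DecidableEq V] (pI : PP → List (Trm Empty CS) → Prop)
    (φ : QCAtom V CS DP PP D) : Prop :=
  φ.deg ≠ ⊥ ∧ (Sol pI φ.cons).Nonempty

/-- The entailment relation `φ ⊨_{Q,C} φ'` between qc-atoms: there is a substitution `θ`
with `A' = Aθ`, `d' ⊑ d` and `Π' ⊨_C Πθ`. -/
def QCEntails [DecidableEq V] (pI : PP → List (Trm Empty CS) → Prop)
    (φ φ' : QCAtom V CS DP PP D) : Prop :=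
  ∃ θ : V → Trm V CS,
    φ'.atom = φ.atom.subst θ ∧ φ'.deg ≤ φ.deg ∧ EntailsSubst pI φ'.cons θ φ.cons

/-- A qc-interpretation: a set of defined observable qc-atoms closed under `⊨_{Q,C}`. -/
def IsInterp [DecidableEq V] (pI : PP → List (Trm Empty CS) → Prop)
    (I : Set (QCAtom V CS DP PP D)) : Prop :=
  (∀ φ ∈ I, φ.atom.IsDefined ∧ Observable pI φ) ∧
  (∀ φ ∈ I, ∀ φ' : QCAtom V CS DP PP D,
    QCEntails pI φ φ' → Observable pI φ' → φ' ∈ I)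

/-- Validity of an observable qc-atom in a qc-interpretation. -/
def Valid [DecidableEq V] (R : CS → CS → D) (pI : PP → List (Trm Empty CS) → Prop)
    (I : Set (QCAtom V CS DP PP D)) (φ : QCAtom V CS DP PP D) : Prop :=
  match φ.atom with
  | .defd _ _ => φ ∈ I
  | .prim p ts => Entails pI φ.cons (Constr.prim p ts)
  | .eq t s => TermClose R pI φ.deg φ.cons t s

/-- A `Q`-valued proximity relation on the symbols (variables, data constructors, defined
predicates, primitive predicates): it is determined by its restrictions to data constructors
and to defined predicate symbols, since it behaves as the identity on variables and is `⊥`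
between symbols of different kinds (and on primitive predicates it is only nonbottom between
equal symbols). -/
structure ProximityRel (D : Type*) [Lattice D] [BoundedOrder D] {CS DP : Type*}
    (arC : CS → ℕ) (arD : DP → ℕ) where
  dc : CS → CS → D
  dp : DP → DP → D
  dc_refl : ∀ c, dc c c = ⊤
  dc_symm : ∀ c c', dc c c' = dc c' c
  dc_arity : ∀ c c', dc c c' ≠ ⊥ → arC c = arC c'
  dp_refl : ∀ r, dp r r = ⊤
  dp_symm : ∀ r r', dp r r' = dp r' r
  dp_arity : ∀ r r', dp r r' ≠ ⊥ → arD r = arD r'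

/-- A program clause `p(t₁,…,tₙ) ←α– B₁#w₁, …, Bₘ#wₘ`; a threshold `wⱼ` is either `some w`
with `w ∈ D` or `none` (standing for `?`). -/
structure Clause (V CS DP PP D : Type*) where
  headPred : DP
  headArgs : List (Trm V CS)
  att : D
  body : List (Atom V CS DP PP × Option D)

/-- Well-formedness of a clause: the attenuation factor and all thresholds are `≠ ⊥`. -/
def ClauseWF (C : Clause V CS DP PP D) : Prop :=
  C.att ≠ ⊥ ∧ ∀ bw ∈ C.body, ∀ w, bw.2 = some w → w ≠ (⊥ : D)

/-- A SQCLP program: a set of well-formed clauses. -/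
def ProgWF (P : Set (Clause V CS DP PP D)) : Prop := ∀ C ∈ P, ClauseWF C

/-- `e ⊒? w`: trivially true for `w = ?`, and `w ⊑ e` otherwise. -/
def MeetsThreshold (e : D) : Option D → Prop
  | none => True
  | some w => w ≤ e

/-- The observable defined qc-atom `φ : p'(t'₁,…,t'ₙ)#d ⇐ Π` is an immediate consequence of
the qc-interpretation `I` via the clause `C`. -/
def ImmCons [DecidableEq V] (Q : QualificationDomain D) {arC : CS → ℕ} {arD : DP → ℕ}
    (Rl : ProximityRel D arC arD) (pI : PP → List (Trm Empty CS) → Prop)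
    (I : Set (QCAtom V CS DP PP D)) (C : Clause V CS DP PP D)
    (φ : QCAtom V CS DP PP D) : Prop :=
  ∃ (p' : DP) (ts' : List (Trm V CS)),
    φ.atom = Atom.defd p' ts' ∧ Observable pI φ ∧
    ∃ (θ : V → Trm V CS) (hn : C.headArgs.length = ts'.length)
      (ds : Fin ts'.length → D) (es : Fin C.body.length → D),
      Rl.dp p' C.headPred ≠ ⊥ ∧
      (∀ i, ds i ≠ ⊥) ∧ (∀ j, es j ≠ ⊥) ∧
      (∀ i : Fin ts'.length,
        TermClose Rl.dc pI (ds i) φ.cons (ts'.get i)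
          ((C.headArgs.get (Fin.cast hn.symm i)).subst θ)) ∧
      (∀ j : Fin C.body.length,
        Valid Rl.dc pI I ⟨((C.body.get j).1.subst θ), es j, φ.cons⟩) ∧
      (∀ j : Fin C.body.length, MeetsThreshold (es j) (C.body.get j).2) ∧
      φ.deg ≤ (Rl.dp p' C.headPred ⊓ Finset.univ.inf ds) ⊓ Q.att C.att (Finset.univ.inf es)

/-- The interpretation transformer `T_P`. -/
def Tp [DecidableEq V] (Q : QualificationDomain D) {arC : CS → ℕ} {arD : DP → ℕ}
    (Rl : ProximityRel D arC arD) (pI : PP → List (Trm Empty CS) → Prop)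
    (P : Set (Clause V CS DP PP D)) (I : Set (QCAtom V CS DP PP D)) :
    Set (QCAtom V CS DP PP D) :=
  {φ | ∃ C ∈ P, ImmCons Q Rl pI I C φ}

/-- `I` is a model of the clause `C`. -/
def ModelsClause [DecidableEq V] (Q : QualificationDomain D) {arC : CS → ℕ} {arD : DP → ℕ}
    (Rl : ProximityRel D arC arD) (pI : PP → List (Trm Empty CS) → Prop)
    (I : Set (QCAtom V CS DP PP D)) (C : Clause V CS DP PP D) : Prop :=
  ∀ φ, ImmCons Q Rl pI I C φ → φ ∈ I

/-- `I ⊨_{ℛ,Q,C} P` : `I` is a model of the program `P`. -/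
def ModelsProg [DecidableEq V] (Q : QualificationDomain D) {arC : CS → ℕ} {arD : DP → ℕ}
    (Rl : ProximityRel D arC arD) (pI : PP → List (Trm Empty CS) → Prop)
    (I : Set (QCAtom V CS DP PP D)) (P : Set (Clause V CS DP PP D)) : Prop :=
  ∀ C ∈ P, ModelsClause Q Rl pI I C

/-- Derivability `P ⊢_{ℛ,Q,C} φ` in the Proximity-based Qualified Constrained Horn Logic
SQCHL(ℛ,Q,C), with inference rules SQDA, SQEA and SQPA. -/
inductive Deriv [DecidableEq V] (Q : QualificationDomain D) {arC : CS → ℕ} {arD : DP → ℕ}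
    (Rl : ProximityRel D arC arD) (pI : PP → List (Trm Empty CS) → Prop)
    (P : Set (Clause V CS DP PP D)) : QCAtom V CS DP PP D → Prop
  | sqea : ∀ (d : D) (Pi : Set (Constr V CS PP)) (t s : Trm V CS),
      d ≠ ⊥ → TermClose Rl.dc pI d Pi t s → Deriv Q Rl pI P ⟨Atom.eq t s, d, Pi⟩
  | sqpa : ∀ (d : D) (Pi : Set (Constr V CS PP)) (p : PP) (ts : List (Trm V CS)),
      d ≠ ⊥ → Entails pI Pi (Constr.prim p ts) → Deriv Q Rl pI P ⟨Atom.prim p ts, d, Pi⟩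
  | sqda : ∀ (C : Clause V CS DP PP D), C ∈ P →
      ∀ (θ : V → Trm V CS) (p' : DP) (ts' : List (Trm V CS)) (d : D)
        (Pi : Set (Constr V CS PP)) (hn : C.headArgs.length = ts'.length)
        (ds : Fin ts'.length → D) (es : Fin C.body.length → D),
      Rl.dp p' C.headPred ≠ ⊥ →
      (∀ i, ds i ≠ ⊥) → (∀ j, es j ≠ ⊥) →
      (∀ i : Fin ts'.length,
        Deriv Q Rl pI P
          ⟨Atom.eq (ts'.get i) ((C.headArgs.get (Fin.cast hn.symm i)).subst θ), ds i, Pi⟩) →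
      (∀ j : Fin C.body.length,
        Deriv Q Rl pI P ⟨((C.body.get j).1.subst θ), es j, Pi⟩) →
      (∀ j : Fin C.body.length, MeetsThreshold (es j) (C.body.get j).2) →
      d ≤ (Rl.dp p' C.headPred ⊓ Finset.univ.inf ds) ⊓ Q.att C.att (Finset.univ.inf es) →
      Deriv Q Rl pI P ⟨Atom.defd p' ts', d, Pi⟩
/-!
Soundness is an induction on derivations: an SQDA step whose premises are valid in a model `I`
is literally an immediate consequence of `I`, hence lies in `I`, while SQEA and SQPA conclude
exactly what validity of equations and primitive atoms demands.

For completeness, derivations survive instantiation, lowering of the qualification value and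
strengthening of the constraint set, so the observable derivable defined qc-atoms form a
qc-interpretation; it is a model of `P` because an immediate consequence is an SQDA step with
derivable premises. It therefore contains the least model `M`, and `M ⊨ φ` yields `P ⊢ φ`.
-/

theorem List.le_foldr_inf_iff {α : Type*} [SemilatticeInf α] [OrderTop α] {a : α} :
    ∀ {l : List α}, a ≤ l.foldr (· ⊓ ·) ⊤ ↔ ∀ x ∈ l, a ≤ x
  | [] => by simp
  | b :: l => by simp [List.le_foldr_inf_iff (l := l)]

theorem Finset.univ_inf_comp_cast {α : Type*} [SemilatticeInf α] [OrderTop α] {n m : ℕ}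
    (h : n = m) (f : Fin m → α) :
    Finset.univ.inf (fun i : Fin n => f (Fin.cast h i)) = Finset.univ.inf f := by
  subst h
  rfl

namespace Trm

@[simp]
theorem subst_var (θ : V → Trm V CS) (X : V) : (var X : Trm V CS).subst θ = θ X := by
  rw [Trm.subst]

@[simp]
theorem subst_app (θ : V → Trm V CS) (c : CS) (ts : List (Trm V CS)) :
    (app c ts).subst θ = app c (ts.map (Trm.subst θ)) := by
  rw [Trm.subst, List.attach_map_val (f := Trm.subst θ)]

@[simp]
theorem applyVal_var (η : V → Trm Empty CS) (X : V) : (var X : Trm V CS).applyVal η = η X := by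
  rw [Trm.applyVal]

@[simp]
theorem applyVal_app (η : V → Trm Empty CS) (c : CS) (ts : List (Trm V CS)) :
    (app c ts).applyVal η = app c (ts.map (Trm.applyVal η)) := by
  rw [Trm.applyVal, List.attach_map_val (f := Trm.applyVal η)]

theorem subst_subst (θ θ' : V → Trm V CS) :
    ∀ t : Trm V CS, (t.subst θ).subst θ' = t.subst (fun X => (θ X).subst θ')
  | var X => by simp
  | app c ts => by
    simp only [subst_app, List.map_map, app.injEq, true_and]
    exact List.map_congr_left fun t _ => subst_subst θ θ' t

theorem applyVal_subst (θ : V → Trm V CS) (η : V → Trm Empty CS) :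
    ∀ t : Trm V CS, (t.subst θ).applyVal η = t.applyVal (fun X => (θ X).applyVal η)
  | var X => by simp
  | app c ts => by
    simp only [subst_app, applyVal_app, List.map_map, app.injEq, true_and]
    exact List.map_congr_left fun t _ => applyVal_subst θ η t

section Ext

variable [DecidableEq V] (R : CS → CS → D)

@[simp]
theorem ext_var_var (X Y : V) : ext R (var X : Trm V CS) (var Y) = if X = Y then ⊤ else ⊥ := by
  rw [Trm.ext]

@[simp]
theorem ext_var_app (X : V) (c : CS) (ss : List (Trm V CS)) : ext R (var X) (app c ss) = ⊥ := by
  rw [Trm.ext]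

@[simp]
theorem ext_app_var (X : V) (c : CS) (ts : List (Trm V CS)) : ext R (app c ts) (var X) = ⊥ := by
  rw [Trm.ext]

theorem ext_app_app (c c' : CS) (ts ss : List (Trm V CS)) :
    ext R (app c ts) (app c' ss) =
      if ts.length = ss.length then
        R c c' ⊓ ((ts.zip ss).map fun p => ext R p.1 p.2).foldr (· ⊓ ·) ⊤
      else ⊥ := by
  rw [Trm.ext]
  congr 3
  exact List.attach_map_val (f := fun p : Trm V CS × Trm V CS => ext R p.1 p.2)

variable {R}

theorem ext_self (hR : ∀ c, R c c = ⊤) : ∀ t : Trm V CS, ext R t t = ⊤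
  | var X => by simp
  | app c ts => by
    rw [ext_app_app, if_pos rfl, hR, top_inf_eq, List.map_zip_eq_zipWith, List.zipWith_self]
    refine top_unique (List.le_foldr_inf_iff.2 fun x hx => ?_)
    obtain ⟨t, ht, rfl⟩ := List.mem_map.1 hx
    exact (ext_self hR t).ge

-- Only an inequality: `θ` may identify distinct variables.
theorem ext_le_ext_subst (hR : ∀ c, R c c = ⊤) (θ : V → Trm V CS) :
    ∀ t s : Trm V CS, ext R t s ≤ ext R (t.subst θ) (s.subst θ)
  | var X, var Y => by
    by_cases h : X = Y
    · simp [h, ext_self hR]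
    · simp [h]
  | var X, app c ss => by simp
  | app c ts, var X => by simp
  | app c ts, app c' ss => by
    simp only [subst_app, ext_app_app, List.length_map]
    split_ifs
    · refine inf_le_inf_left _ (List.le_foldr_inf_iff.2 fun x hx => ?_)
      rw [List.zip_map, List.map_map, List.mem_map] at hx
      obtain ⟨p, hp, rfl⟩ := hx
      have hmem : p.1 ∈ ts := (List.of_mem_zip hp).1
      calc ((ts.zip ss).map fun p => ext R p.1 p.2).foldr (· ⊓ ·) ⊤
          ≤ ext R p.1 p.2 := List.le_foldr_inf_iff.1 le_rfl _ (List.mem_map_of_mem hp)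
        _ ≤ ext R (p.1.subst θ) (p.2.subst θ) := ext_le_ext_subst hR θ p.1 p.2
    · exact le_rfl
termination_by t _ => sizeOf t
decreasing_by
  simp only [Trm.app.sizeOf_spec]
  have := List.sizeOf_lt_of_mem hmem
  omega

end Ext

end Trm

theorem Atom.subst_subst (θ θ' : V → Trm V CS) (A : Atom V CS DP PP) :
    (A.subst θ).subst θ' = A.subst (fun X => (θ X).subst θ') := by
  cases A <;> simp [Atom.subst, Function.comp_def, Trm.subst_subst]

theorem Atom.IsDefined.subst {A : Atom V CS DP PP} (h : A.IsDefined) (θ : V → Trm V CS) :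
    (A.subst θ).IsDefined := by
  cases A <;> simp_all [Atom.subst, Atom.IsDefined]

section Semantics

variable [DecidableEq V] {pI : PP → List (Trm Empty CS) → Prop}
  {Pi Pi' : Set (Constr V CS PP)} {θ : V → Trm V CS}

theorem Entails.eq_subst (hE : EntailsSubst pI Pi' θ Pi) {t s : Trm V CS}
    (h : Entails pI Pi (.eq t s)) : Entails pI Pi' (.eq (t.subst θ) (s.subst θ)) := by
  intro η hη
  simpa only [Constr.sat, Trm.applyVal_subst] using h _ (hE η hη)

theorem Entails.prim_subst (hE : EntailsSubst pI Pi' θ Pi) {p : PP} {ts : List (Trm V CS)}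
    (h : Entails pI Pi (.prim p ts)) : Entails pI Pi' (.prim p (ts.map (Trm.subst θ))) := by
  intro η hη
  simpa only [Constr.sat, List.map_map, Function.comp_def, Trm.applyVal_subst]
    using h _ (hE η hη)

theorem TermClose.subst {R : CS → CS → D} (hR : ∀ c, R c c = ⊤) {d d' : D} {t s : Trm V CS}
    (h : TermClose R pI d Pi t s) (hd : d' ≤ d) (hE : EntailsSubst pI Pi' θ Pi) :
    TermClose R pI d' Pi' (t.subst θ) (s.subst θ) :=
  let ⟨th, sh, ht, hs, hle⟩ := h
  ⟨th.subst θ, sh.subst θ, ht.eq_subst hE, hs.eq_subst hE,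
    hd.trans (hle.trans (Trm.ext_le_ext_subst hR θ th sh))⟩

variable {arC : CS → ℕ} {arD : DP → ℕ} {Q : QualificationDomain D}
  {Rl : ProximityRel D arC arD} {P : Set (Clause V CS DP PP D)}

theorem Deriv.subst {φ : QCAtom V CS DP PP D} (h : Deriv Q Rl pI P φ) {d' : D} (hd' : d' ≠ ⊥)
    (hle : d' ≤ φ.deg) (hE : EntailsSubst pI Pi' θ φ.cons) :
    Deriv Q Rl pI P ⟨φ.atom.subst θ, d', Pi'⟩ := by
  induction h generalizing d' with
  | sqea _ _ _ _ _ hclose => exact .sqea _ _ _ _ hd' (hclose.subst Rl.dc_refl hle hE)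
  | sqpa _ _ _ _ _ hent => exact .sqpa _ _ _ _ hd' (hent.prim_subst hE)
  | sqda C hC θ₀ p' ts' d Pi hn ds es hp hds hes _ _ hth hbound ihHead ihBody =>
    have hlen : (ts'.map (Trm.subst θ)).length = ts'.length := List.length_map _
    refine .sqda C hC (fun X => (θ₀ X).subst θ) p' _ d' Pi' (hn.trans hlen.symm)
      (fun i => ds (Fin.cast hlen i)) es hp (fun i => hds _) hes (fun i => ?_)
      (fun j => ?_) hth ?_
    · simpa [Atom.subst, Trm.subst_subst] using ihHead (Fin.cast hlen i) (hds _) le_rfl hE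
    · simpa [Atom.subst_subst] using ihBody j (hes j) le_rfl hE
    · rw [Finset.univ_inf_comp_cast hlen ds]
      exact hle.trans hbound

theorem Deriv.of_qcEntails {φ φ' : QCAtom V CS DP PP D} (h : Deriv Q Rl pI P φ)
    (hφ : QCEntails pI φ φ') (hd : φ'.deg ≠ ⊥) : Deriv Q Rl pI P φ' := by
  obtain ⟨θ, hA, hle, hE⟩ := hφ
  have := h.subst hd hle hE
  rwa [← hA] at this

theorem Deriv.valid {φ : QCAtom V CS DP PP D} (h : Deriv Q Rl pI P φ)
    {I : Set (QCAtom V CS DP PP D)} (hI : ModelsProg Q Rl pI I P) (hφ : Observable pI φ) :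
    Valid Rl.dc pI I φ := by
  induction h with
  | sqea _ _ _ _ _ hclose => exact hclose
  | sqpa _ _ _ _ _ hent => exact hent
  | sqda C hC θ p' ts' d Pi hn ds es hp hds hes _ _ hth hbound ihHead ihBody =>
    exact hI C hC _ ⟨p', ts', rfl, hφ, θ, hn, ds, es, hp, hds, hes,
      fun i => ihHead i ⟨hds i, hφ.2⟩, fun j => ihBody j ⟨hes j, hφ.2⟩, hth, hbound⟩

def derivableAtoms (Q : QualificationDomain D) (Rl : ProximityRel D arC arD)
    (pI : PP → List (Trm Empty CS) → Prop) (P : Set (Clause V CS DP PP D)) :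
    Set (QCAtom V CS DP PP D) :=
  {φ | φ.atom.IsDefined ∧ Observable pI φ ∧ Deriv Q Rl pI P φ}

theorem Deriv.of_valid {I : Set (QCAtom V CS DP PP D)} (hI : I ⊆ derivableAtoms Q Rl pI P)
    {φ : QCAtom V CS DP PP D} (hd : φ.deg ≠ ⊥) (h : Valid Rl.dc pI I φ) :
    Deriv Q Rl pI P φ := by
  obtain ⟨A, d, Pi⟩ := φ
  cases A with
  | defd => exact (hI h).2.2
  | prim p ts => exact .sqpa d Pi p ts hd h
  | eq t s => exact .sqea d Pi t s hd h

theorem isInterp_derivableAtoms : IsInterp pI (derivableAtoms Q Rl pI P) := by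
  refine ⟨fun φ hφ => ⟨hφ.1, hφ.2.1⟩, fun φ hφ φ' hent hobs => ⟨?_, hobs, ?_⟩⟩
  · obtain ⟨θ, hA, -⟩ := hent
    exact hA ▸ hφ.1.subst θ
  · exact hφ.2.2.of_qcEntails hent hobs.1

theorem modelsProg_derivableAtoms : ModelsProg Q Rl pI (derivableAtoms Q Rl pI P) P := by
  rintro C hC ⟨A, d, Pi⟩
    ⟨p', ts', hA, hobs, θ, hn, ds, es, hp, hds, hes, hHead, hBody, hth, hbound⟩
  obtain rfl : A = .defd p' ts' := hA
  exact ⟨trivial, hobs, .sqda C hC θ p' ts' d Pi hn ds es hp hds hes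
    (fun i => .sqea _ _ _ _ (hds i) (hHead i))
    (fun j => Deriv.of_valid subset_rfl (hes j) (hBody j)) hth hbound⟩

end Semantics

section Theorems

variable {V CS DP PP D : Type*} [DecidableEq V] [Lattice D] [BoundedOrder D]
variable {arC : CS → ℕ} {arD : DP → ℕ}

theorem SQCHL_sound_and_complete_general
    (Q : QualificationDomain D) (Rl : ProximityRel D arC arD)
    (pI : PP → List (Trm Empty CS) → Prop)
    (P : Set (Clause V CS DP PP D))
    (M : Set (QCAtom V CS DP PP D))
    (hM : IsInterp pI M) (hMmod : ModelsProg Q Rl pI M P)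
    (hMleast : ∀ I, IsInterp pI I → ModelsProg Q Rl pI I P → M ⊆ I)
    (φ : QCAtom V CS DP PP D) (hφ : Observable pI φ) :
    (Deriv Q Rl pI P φ ↔
      ∀ I, IsInterp pI I → ModelsProg Q Rl pI I P → Valid Rl.dc pI I φ) ∧
    (Deriv Q Rl pI P φ ↔ Valid Rl.dc pI M φ) := by
  have complete : Valid Rl.dc pI M φ → Deriv Q Rl pI P φ :=
    Deriv.of_valid (hMleast _ isInterp_derivableAtoms modelsProg_derivableAtoms) hφ.1
  exact ⟨⟨fun h I _ hIP => h.valid hIP hφ, fun h => complete (h M hM hMmod)⟩,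
    ⟨fun h => h.valid hMmod hφ, complete⟩⟩

/-- Soundness and completeness of SQCHL(ℛ,Q,C): for every observable
qc-atom `φ`, derivability `P ⊢_{ℛ,Q,C} φ`, semantic consequence `P ⊨_{ℛ,Q,C} φ` and
validity in the least model `M_P ⊨ φ` are all equivalent. -/
theorem SQCHL_sound_and_complete
    (Q : QualificationDomain D) (Rl : ProximityRel D arC arD)
    (pI : PP → List (Trm Empty CS) → Prop)
    (P : Set (Clause V CS DP PP D)) (hP : ProgWF P)
    (M : Set (QCAtom V CS DP PP D))
    (hM : IsInterp pI M) (hMmod : ModelsProg Q Rl pI M P)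
    (hMleast : ∀ I, IsInterp pI I → ModelsProg Q Rl pI I P → M ⊆ I)
    (φ : QCAtom V CS DP PP D) (hφ : Observable pI φ) :
    (Deriv Q Rl pI P φ ↔
      ∀ I, IsInterp pI I → ModelsProg Q Rl pI I P → Valid Rl.dc pI I φ) ∧
    (Deriv Q Rl pI P φ ↔ Valid Rl.dc pI M φ) :=
  SQCHL_sound_and_complete_general Q Rl pI P M hM hMmod hMleast φ hφ

end Theorems
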